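/- Let m, ρ₀ > 0, set θ = 2ρ₀/m, and let ρ : 𝕋 → (0,∞) be continuous. Then sup { ∫₀¹ φ(x) ρ(x) dx + (m/2) ∫₀¹ log(1 − θ φ(x)) dx : φ : 𝕋 → ℝ continuous with θ · sup_x φ(x) < 1 } = (m/2) ∫₀¹ ( ρ(x)/ρ₀ − 1 − log(ρ(x)/ρ₀) ) dx. That is, the equilibrium rate functional S_{ρ₀,m} evaluated at a continuous positive density is the Legendre transform of the functional G(φ) = −(m/2)∫₀¹ log(1−θφ(x)) dx. -/

import Mathlib

/-! The pointwise inequality `t r + (m/2) log(1 - θ t) ≤ (m/2)(r/ρ₀ - 1 - log(r/ρ₀))` is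
`log u ≤ u - 1` for `u = (1 - θ t) r / ρ₀`, with equality exactly when `u = 1`, i.e. at
`t = (m / 2ρ₀)(1 - ρ₀ / r)`. Integrating against `ρ` bounds every admissible value by the
right-hand side, and the potential `φ = (m / 2ρ₀)(1 - ρ₀ / ρ)` attains it; it is admissible
because a continuous periodic function attains its supremum. -/

open Real intervalIntegral

theorem Function.Periodic.ciSup_lt_iff_of_continuous {f : ℝ → ℝ} {c b : ℝ}
    (hp : Function.Periodic f c) (hc : c ≠ 0) (hf : Continuous f) :
    (⨆ x, f x) < b ↔ ∀ x, f x < b := by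
  have hcompact := hp.compact_of_continuous hc hf
  refine ⟨fun h x => (le_ciSup hcompact.bddAbove x).trans_lt h, fun h => ?_⟩
  obtain ⟨x, hx⟩ := hcompact.sSup_mem (Set.range_nonempty f)
  rw [iSup, ← hx]
  exact h x

theorem mul_add_half_mul_log_le (m ρ₀ t r : ℝ) (hm : 0 < m) (hρ₀ : 0 < ρ₀) (hr : 0 < r)
    (ht : 0 < 1 - 2 * ρ₀ / m * t) :
    t * r + m / 2 * log (1 - 2 * ρ₀ / m * t) ≤ m / 2 * (r / ρ₀ - 1 - log (r / ρ₀)) := by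
  have hu : 0 < r / ρ₀ := div_pos hr hρ₀
  have hlog := log_le_sub_one_of_pos (mul_pos ht hu)
  rw [log_mul ht.ne' hu.ne'] at hlog
  have hlin : m / 2 * ((1 - 2 * ρ₀ / m * t) * (r / ρ₀) - 1) = m / 2 * (r / ρ₀ - 1) - t * r := by
    field_simp
    ring
  have := mul_le_mul_of_nonneg_left hlog (half_pos hm).le
  linarith

theorem one_sub_mul_optimal_potential (m ρ₀ r : ℝ) (hm : m ≠ 0) (hρ₀ : ρ₀ ≠ 0) (hr : r ≠ 0) :
    1 - 2 * ρ₀ / m * (m / (2 * ρ₀) * (1 - ρ₀ / r)) = ρ₀ / r := by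
  field_simp
  ring

theorem optimal_potential_mul_add_half_mul_log (m ρ₀ r : ℝ) (hm : m ≠ 0) (hρ₀ : ρ₀ ≠ 0)
    (hr : r ≠ 0) :
    m / (2 * ρ₀) * (1 - ρ₀ / r) * r + m / 2 * log (1 - 2 * ρ₀ / m * (m / (2 * ρ₀) * (1 - ρ₀ / r)))
      = m / 2 * (r / ρ₀ - 1 - log (r / ρ₀)) := by
  rw [one_sub_mul_optimal_potential m ρ₀ r hm hρ₀ hr, ← inv_div r, log_inv]
  field_simp
  ring

theorem integral_add_const_mul_integral_log {f g : ℝ → ℝ} (hf : Continuous f)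
    (hg : Continuous g) (hg₀ : ∀ x, g x ≠ 0) (c a b : ℝ) :
    (∫ x in a..b, f x) + c * ∫ x in a..b, log (g x) = ∫ x in a..b, (f x + c * log (g x)) := by
  rw [← integral_const_mul]
  exact (integral_add (hf.intervalIntegrable a b)
    ((continuous_const.mul (hg.log hg₀)).intervalIntegrable a b)).symm

section RateFunctional

variable {m ρ₀ : ℝ} {ρ : ℝ → ℝ}

theorem integral_mul_add_half_mul_integral_log_le (hm : 0 < m) (hρ₀ : 0 < ρ₀)
    (hρcont : Continuous ρ) (hρpos : ∀ x, 0 < ρ x) {a b : ℝ} (hab : a ≤ b) {φ : ℝ → ℝ}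
    (hφcont : Continuous φ) (hφ : ∀ x, 0 < 1 - 2 * ρ₀ / m * φ x) :
    (∫ x in a..b, φ x * ρ x) + m / 2 * ∫ x in a..b, log (1 - 2 * ρ₀ / m * φ x)
      ≤ m / 2 * ∫ x in a..b, (ρ x / ρ₀ - 1 - log (ρ x / ρ₀)) := by
  have hφ₀ : ∀ x, 1 - 2 * ρ₀ / m * φ x ≠ 0 := fun x => (hφ x).ne'
  have hρ₀' : ∀ x, ρ x / ρ₀ ≠ 0 := fun x => (div_pos (hρpos x) hρ₀).ne'
  rw [integral_add_const_mul_integral_log (f := fun x => φ x * ρ x) (by fun_prop) (by fun_prop)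
    hφ₀, ← integral_const_mul]
  refine integral_mono hab ?_ ?_
    fun x => mul_add_half_mul_log_le m ρ₀ (φ x) (ρ x) hm hρ₀ (hρpos x) (hφ x)
  all_goals exact Continuous.intervalIntegrable (by fun_prop (disch := assumption)) a b

theorem integral_optimal_potential (hm : m ≠ 0) (hρ₀ : ρ₀ ≠ 0) (hρcont : Continuous ρ)
    (hρ : ∀ x, ρ x ≠ 0) (a b : ℝ) :
    (∫ x in a..b, m / (2 * ρ₀) * (1 - ρ₀ / ρ x) * ρ x)
        + m / 2 * ∫ x in a..b, log (1 - 2 * ρ₀ / m * (m / (2 * ρ₀) * (1 - ρ₀ / ρ x)))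
      = m / 2 * ∫ x in a..b, (ρ x / ρ₀ - 1 - log (ρ x / ρ₀)) := by
  have hψ₀ : ∀ x, 1 - 2 * ρ₀ / m * (m / (2 * ρ₀) * (1 - ρ₀ / ρ x)) ≠ 0 := fun x => by
    rw [one_sub_mul_optimal_potential m ρ₀ (ρ x) hm hρ₀ (hρ x)]
    exact div_ne_zero hρ₀ (hρ x)
  rw [integral_add_const_mul_integral_log (f := fun x => m / (2 * ρ₀) * (1 - ρ₀ / ρ x) * ρ x)
    (by fun_prop (disch := assumption)) (by fun_prop (disch := assumption)) hψ₀,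
    ← integral_const_mul]
  exact integral_congr fun x _ => optimal_potential_mul_add_half_mul_log m ρ₀ (ρ x) hm hρ₀ (hρ x)

end RateFunctional

/-- **The equilibrium rate functional is the Legendre transform of the cumulant
generating functional.**  Let `m, ρ₀ > 0`, `θ = 2ρ₀/m`, and let `ρ : 𝕋 → (0,∞)` be
continuous (a continuous positive 1-periodic function on `ℝ`).  Then
`sup { ∫₀¹ φ ρ + (m/2) ∫₀¹ log(1 − θφ) : φ continuous 1-periodic, θ ⬝ sup φ < 1 }`
`  = (m/2) ∫₀¹ ( ρ/ρ₀ − 1 − log(ρ/ρ₀) )`. -/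
theorem rate_functional_legendre_transform (m ρ₀ θ : ℝ) (hm : 0 < m) (hρ₀ : 0 < ρ₀)
    (hθ : θ = 2 * ρ₀ / m) (ρ : ℝ → ℝ) (hρcont : Continuous ρ)
    (hρper : ∀ x, ρ (x + 1) = ρ x) (hρpos : ∀ x, 0 < ρ x) :
    sSup {y : ℝ | ∃ φ : ℝ → ℝ, Continuous φ ∧ (∀ x, φ (x + 1) = φ x) ∧
        θ * (⨆ x, φ x) < 1 ∧
        y = (∫ x in (0 : ℝ)..1, φ x * ρ x) + m / 2 * ∫ x in (0 : ℝ)..1, Real.log (1 - θ * φ x)}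
      = m / 2 * ∫ x in (0 : ℝ)..1, (ρ x / ρ₀ - 1 - Real.log (ρ x / ρ₀)) := by
  subst hθ
  have admissible_iff {φ : ℝ → ℝ} (hφcont : Continuous φ) (hφper : ∀ x, φ (x + 1) = φ x) :
      2 * ρ₀ / m * (⨆ x, φ x) < 1 ↔ ∀ x, 0 < 1 - 2 * ρ₀ / m * φ x := by
    rw [Real.mul_iSup_of_nonneg (by positivity),
      Function.Periodic.ciSup_lt_iff_of_continuous (c := 1) (fun x => by simp only [hφper])
        one_ne_zero (by fun_prop)]
    simp only [sub_pos]
  have hψcont : Continuous fun x => m / (2 * ρ₀) * (1 - ρ₀ / ρ x) :=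
    continuous_const.mul (continuous_const.sub
      (continuous_const.div hρcont fun x => (hρpos x).ne'))
  refine IsGreatest.csSup_eq ⟨⟨_, hψcont, fun x => by simp only [hρper], ?_, ?_⟩, ?_⟩
  · rw [admissible_iff hψcont fun x => by simp only [hρper]]
    intro x
    rw [one_sub_mul_optimal_potential m ρ₀ (ρ x) hm.ne' hρ₀.ne' (hρpos x).ne']
    exact div_pos hρ₀ (hρpos x)
  · exact (integral_optimal_potential hm.ne' hρ₀.ne' hρcont (fun x => (hρpos x).ne') 0 1).symm
  · rintro y ⟨φ, hφcont, hφper, hφsup, rfl⟩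
    exact integral_mul_add_half_mul_integral_log_le hm hρ₀ hρcont hρpos zero_le_one hφcont
      ((admissible_iff hφcont hφper).1 hφsup)
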